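/- (Display (4.2)) For every integer n ≥ 1 and every s ∈ [0, t_n], one has log(n+1) + 1/(2(n+2)) − (s+1) ≤ t_n − s − γ ≤ log(m(t_n − s) + 2) − 1 + 1/(2(m(t_n − s) + 1)), where γ is the Euler–Mascheroni constant. -/

import Mathlib

noncomputable section

/-- The interpolation times `t_k = ∑_{j=1}^k 1/(j+1)` (so `t_0 = 0`). -/
def tSeq (k : ℕ) : ℝ := ∑ j ∈ Finset.range k, (1 : ℝ) / (j + 2)

/-- `m(s) = sup {k ∈ ℕ₀ : t_k ≤ s}`. -/
def mFun (s : ℝ) : ℕ := sSup {k : ℕ | tSeq k ≤ s}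

/-- `ψ_e(s) = m(s) + 2`. -/
def psiE (s : ℝ) : ℝ := (mFun s : ℝ) + 2

/-!
Since `t_k = H_{k+1} - 1`, both bounds are the classical two-sided estimate
`1 / (2 (k + 1)) ≤ H_k - log k - γ ≤ 1 / (2 k)`, taken at `k = n + 1` for the lower bound and
at `k = m + 2` for the upper one, where `t_n - s < t_{m+1}` by maximality of `m = m(t_n - s)`.
The estimate itself holds because `H_k - log k - 1 / (2 k)` increases and
`H_k - log k - 1 / (2 (k + 1))` decreases to `γ`; their increments have a sign by the
midpoint and trapezoid bounds `2 / (2a + 1) ≤ log (a + 1) - log a ≤ 1 / (2a) + 1 / (2 (a + 1))`,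
both read off the series `log (1 + a⁻¹) = ∑ 2 / (2j + 1) · (2a + 1)^-(2j+1)`.
-/

open Real Filter Topology

namespace Real

theorem log_add_one_sub_log {a : ℝ} (ha : 0 < a) : log (a + 1) - log a = log (1 + a⁻¹) := by
  rw [← log_div (by positivity) ha.ne']
  congr 1
  field_simp

theorem two_div_two_mul_add_one_le_log_add_one_sub_log {a : ℝ} (ha : 0 < a) :
    2 / (2 * a + 1) ≤ log (a + 1) - log a := by
  rw [log_add_one_sub_log ha, div_eq_mul_inv]
  simpa using le_hasSum (hasSum_log_one_add_inv ha) 0 fun k _ => by positivity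

theorem log_add_one_sub_log_le {a : ℝ} (ha : 0 < a) :
    log (a + 1) - log a ≤ 1 / (2 * a) + 1 / (2 * (a + 1)) := by
  have hu0 : 0 ≤ 1 / (2 * a + 1) := by positivity
  have hu1 : (1 / (2 * a + 1)) ^ 2 < 1 := by
    rw [sq_lt_one_iff₀ hu0, div_lt_one (by positivity)]
    linarith
  have hgeom := (hasSum_geometric_of_lt_one (by positivity) hu1).mul_left (2 * (1 / (2 * a + 1)))
  have hterm (j : ℕ) : 2 * (1 / (2 * (j : ℝ) + 1)) * (1 / (2 * a + 1)) ^ (2 * j + 1) ≤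
      2 * (1 / (2 * a + 1)) * ((1 / (2 * a + 1)) ^ 2) ^ j :=
    calc 2 * (1 / (2 * (j : ℝ) + 1)) * (1 / (2 * a + 1)) ^ (2 * j + 1)
        ≤ 2 * 1 * (1 / (2 * a + 1)) ^ (2 * j + 1) := by
          gcongr
          rw [div_le_one (by positivity)]
          linarith [j.cast_nonneg (α := ℝ)]
      _ = 2 * (1 / (2 * a + 1)) * ((1 / (2 * a + 1)) ^ 2) ^ j := by ring
  have hsq : 1 - (1 / (2 * a + 1)) ^ 2 = 4 * a * (a + 1) / (2 * a + 1) ^ 2 := by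
    field_simp
    ring
  rw [log_add_one_sub_log ha]
  refine (hasSum_le hterm (hasSum_log_one_add_inv ha) hgeom).trans_eq ?_
  rw [hsq]
  field_simp
  ring

theorem tendsto_harmonic_succ_sub_log_sub_one_div (c : ℝ) :
    Tendsto (fun j : ℕ => (harmonic (j + 1) : ℝ) - log (j + 1) - 1 / (2 * (j + c))) atTop
      (𝓝 eulerMascheroniConstant) := by
  have hc : Tendsto (fun j : ℕ => 1 / (2 * ((j : ℝ) + c))) atTop (𝓝 0) :=
    tendsto_const_nhds.div_atTop <|
      (tendsto_atTop_add_const_right _ c tendsto_natCast_atTop_atTop).const_mul_atTop two_pos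
  simpa using (tendsto_harmonic_sub_log.comp (tendsto_add_atTop_nat 1)).sub hc

theorem harmonic_sub_log_sub_one_div_le_eulerMascheroniConstant {k : ℕ} (hk : k ≠ 0) :
    harmonic k - log k - 1 / (2 * k) ≤ eulerMascheroniConstant := by
  have hmono :
      Monotone fun j : ℕ => (harmonic (j + 1) : ℝ) - log (j + 1) - 1 / (2 * (j + 1)) := by
    refine monotone_nat_of_le_succ fun j => ?_
    have hlog := log_add_one_sub_log_le (a := j + 1) (by positivity)
    have hinv : ((j : ℝ) + 1 + 1)⁻¹ = 2 * (1 / (2 * ((j : ℝ) + 1 + 1))) := by field_simp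
    push_cast [harmonic_succ]
    linarith
  obtain ⟨j, rfl⟩ := Nat.exists_eq_add_one_of_ne_zero hk
  simpa using hmono.ge_of_tendsto (tendsto_harmonic_succ_sub_log_sub_one_div 1) j

theorem eulerMascheroniConstant_le_harmonic_sub_log_sub_one_div {k : ℕ} (hk : k ≠ 0) :
    eulerMascheroniConstant ≤ harmonic k - log k - 1 / (2 * (k + 1)) := by
  have hanti :
      Antitone fun j : ℕ => (harmonic (j + 1) : ℝ) - log (j + 1) - 1 / (2 * (j + 2)) := by
    refine antitone_nat_of_succ_le fun j => ?_
    have hlog := two_div_two_mul_add_one_le_log_add_one_sub_log (a := j + 1) (by positivity)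
    have hmid : ((j : ℝ) + 1 + 1)⁻¹ + 1 / (2 * ((j : ℝ) + 2)) - 1 / (2 * ((j : ℝ) + 1 + 2)) ≤
        2 / (2 * ((j : ℝ) + 1) + 1) := by
      have hj := j.cast_nonneg (α := ℝ)
      field_simp
      nlinarith
    push_cast [harmonic_succ]
    linarith
  obtain ⟨j, rfl⟩ := Nat.exists_eq_add_one_of_ne_zero hk
  have := hanti.le_of_tendsto (tendsto_harmonic_succ_sub_log_sub_one_div 2) j
  push_cast
  rwa [add_assoc, one_add_one_eq_two]

end Real

theorem tSeq_eq_harmonic (k : ℕ) : tSeq k = harmonic (k + 1) - 1 := by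
  rw [tSeq, harmonic, Finset.sum_range_succ']
  push_cast
  ring_nf

theorem tendsto_tSeq_atTop : Tendsto tSeq atTop atTop := by
  refine (tendsto_atTop_add_const_right _ (-1)
    (tendsto_sum_range_one_div_nat_succ_atTop.comp (tendsto_add_atTop_nat 1))).congr fun k => ?_
  rw [Function.comp_apply, Finset.sum_range_succ', tSeq]
  push_cast
  ring_nf

theorem lt_tSeq_mFun_add_one (x : ℝ) : x < tSeq (mFun x + 1) := by
  have hbdd : BddAbove {k : ℕ | tSeq k ≤ x} := by
    obtain ⟨N, hN⟩ := eventually_atTop.1 (tendsto_tSeq_atTop.eventually_gt_atTop x)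
    exact ⟨N, fun k hk => not_lt.1 fun hNk => (hN k hNk.le).not_ge hk⟩
  by_contra! h
  exact (mFun x).lt_add_one.not_ge (le_csSup hbdd h)

theorem tSeq_sub_gamma_bounds_general (n : ℕ) (s : ℝ) :
    Real.log ((n : ℝ) + 1) + 1 / (2 * ((n : ℝ) + 2)) - (s + 1) ≤
        tSeq n - s - Real.eulerMascheroniConstant ∧
      tSeq n - s - Real.eulerMascheroniConstant ≤
        Real.log ((mFun (tSeq n - s) : ℝ) + 2) - 1 +
          1 / (2 * ((mFun (tSeq n - s) : ℝ) + 1)) := by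
  constructor
  · have h := eulerMascheroniConstant_le_harmonic_sub_log_sub_one_div n.succ_ne_zero
    push_cast at h
    rw [add_assoc, one_add_one_eq_two] at h
    rw [tSeq_eq_harmonic]
    linarith
  · set m := mFun (tSeq n - s)
    have hlt : tSeq n - s < harmonic (m + 2) - 1 :=
      tSeq_eq_harmonic (m + 1) ▸ lt_tSeq_mFun_add_one _
    have h := harmonic_sub_log_sub_one_div_le_eulerMascheroniConstant (k := m + 2) (by omega)
    have hinv : 1 / (2 * ((m : ℝ) + 2)) ≤ 1 / (2 * ((m : ℝ) + 1)) := by gcongr; linarith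
    push_cast at h
    linarith

/-- **(Display (4.2).)** For every `n ≥ 1` and every `s ∈ [0, t_n]`,
`log(n+1) + 1/(2(n+2)) − (s+1) ≤ t_n − s − γ
  ≤ log(m(t_n − s) + 2) − 1 + 1/(2(m(t_n − s) + 1))`. -/
theorem tSeq_sub_gamma_bounds (n : ℕ) (hn : 1 ≤ n) (s : ℝ)
    (hs : s ∈ Set.Icc 0 (tSeq n)) :
    Real.log ((n : ℝ) + 1) + 1 / (2 * ((n : ℝ) + 2)) - (s + 1) ≤
        tSeq n - s - Real.eulerMascheroniConstant ∧
      tSeq n - s - Real.eulerMascheroniConstant ≤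
        Real.log ((mFun (tSeq n - s) : ℝ) + 2) - 1 +
          1 / (2 * ((mFun (tSeq n - s) : ℝ) + 1)) :=
  tSeq_sub_gamma_bounds_general n s
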